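/- For every m ≥ 0 the following polynomial identities in p hold: Δ₁(m+1) = (p² + p)·Δ₁(m) + a_{m+1}·Δ₂(m) + a_{m+1}²·Δ₁(m-1); Δ₂(m+1) = (2(p² + p) + 1)·Δ₁(m) + a_{m+1}·Δ₂(m) + a_{m+1}·Δ₃(m); Δ₃(m+1) = -Δ₁(m) - a_{m+1}·Δ₃(m); and Δ₄(m+1) = 2(p² + p)·Δ₁(m) + a_{m+1}·Δ₂(m). -/

import Mathlib

open Polynomial

/-- Numerators of the continued fraction `a_1/(p + a_2/(p + ⋯))`, shifted index:
`nseq a (k+1) = n_k`, with `n_{-1} = 1`, `n_0 = 0`, and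
`n_k = p·n_{k-1} + a_k·n_{k-2}` for `k ≥ 1`. -/
noncomputable def nseq (a : ℕ → ℝ) : ℕ → Polynomial ℝ
  | 0 => 1
  | 1 => 0
  | (k+2) => X * nseq a (k+1) + C (a (k+1)) * nseq a k

/-- Denominators of the continued fraction `a_1/(p + a_2/(p + ⋯))`, shifted index:
`dseq a (k+1) = d_k`, with `d_{-1} = 0`, `d_0 = 1`, and
`d_k = p·d_{k-1} + a_k·d_{k-2}` for `k ≥ 1`. -/
noncomputable def dseq (a : ℕ → ℝ) : ℕ → Polynomial ℝ
  | 0 => 0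
  | 1 => 1
  | (k+2) => X * dseq a (k+1) + C (a (k+1)) * dseq a k

/-- `u⁺`: the polynomial `u` evaluated at `p + 1`. -/
noncomputable def shiftUp (u : Polynomial ℝ) : Polynomial ℝ := u.comp (X + 1)

/-- `Δ₁(m) = F*∘z·(d_m·d_m⁺) - F∘z·(n_m·d_m⁺ - n_m⁺·d_m)`. -/
noncomputable def delta1 (a : ℕ → ℝ) (Fs F : Polynomial ℝ) (m : ℕ) : Polynomial ℝ :=
  Fs.comp (X^2 + X) * (dseq a (m+1) * shiftUp (dseq a (m+1)))
    - F.comp (X^2 + X) *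
      (nseq a (m+1) * shiftUp (dseq a (m+1)) - shiftUp (nseq a (m+1)) * dseq a (m+1))

/-- `Δ₁(m-1)`, with the convention `Δ₁(-1) = 0`. -/
noncomputable def delta1pred (a : ℕ → ℝ) (Fs F : Polynomial ℝ) : ℕ → Polynomial ℝ
  | 0 => 0
  | (m+1) => delta1 a Fs F m

/-- `Δ₂(m) = F*∘z·(p·d_m·d_{m-1}⁺ + (p+1)·d_m⁺·d_{m-1})
  - F∘z·(p·n_m·d_{m-1}⁺ - (p+1)·n_m⁺·d_{m-1} + (p+1)·n_{m-1}·d_m⁺ - p·n_{m-1}⁺·d_m)`. -/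
noncomputable def delta2 (a : ℕ → ℝ) (Fs F : Polynomial ℝ) (m : ℕ) : Polynomial ℝ :=
  Fs.comp (X^2 + X) *
      (X * dseq a (m+1) * shiftUp (dseq a m) + (X + 1) * shiftUp (dseq a (m+1)) * dseq a m)
    - F.comp (X^2 + X) *
      (X * nseq a (m+1) * shiftUp (dseq a m) - (X + 1) * shiftUp (nseq a (m+1)) * dseq a m
        + (X + 1) * nseq a m * shiftUp (dseq a (m+1)) - X * shiftUp (nseq a m) * dseq a (m+1))

/-- `Δ₃(m) = F*∘z·(d_m·d_{m-1}⁺ - d_m⁺·d_{m-1})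
  - F∘z·(n_m·d_{m-1}⁺ + n_m⁺·d_{m-1} - n_{m-1}⁺·d_m - n_{m-1}·d_m⁺)`. -/
noncomputable def delta3 (a : ℕ → ℝ) (Fs F : Polynomial ℝ) (m : ℕ) : Polynomial ℝ :=
  Fs.comp (X^2 + X) *
      (dseq a (m+1) * shiftUp (dseq a m) - shiftUp (dseq a (m+1)) * dseq a m)
    - F.comp (X^2 + X) *
      (nseq a (m+1) * shiftUp (dseq a m) + shiftUp (nseq a (m+1)) * dseq a m
        - shiftUp (nseq a m) * dseq a (m+1) - nseq a m * shiftUp (dseq a (m+1)))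

/-- `Δ₄(m) = Δ₂(m) + Δ₃(m)`. -/
noncomputable def delta4 (a : ℕ → ℝ) (Fs F : Polynomial ℝ) (m : ℕ) : Polynomial ℝ :=
  delta2 a Fs F m + delta3 a Fs F m

/-!
Write `U_k = (d_k, n_k)` and `W_k = U_k⁺`, and let `β` be the bilinear pairing
`β(x, y) = F*∘z·x₀y₀ - F∘z·(x₁y₀ - x₀y₁)`. Then `Δ₁(m) = β(U_m, W_m)`, while `Δ₂(m)` and `Δ₃(m)`
are the combinations `p·β(U_m, W_{m-1}) + (p+1)·β(U_{m-1}, W_m)` and the Casoratian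
`β(U_m, W_{m-1}) - β(U_{m-1}, W_m)`. Both `U` and `W` solve the three-term recurrence with the
same `a_k`, but with `p` resp. `p + 1` as the leading coefficient; expanding by bilinearity gives
the recurrences for an arbitrary pairing, the term `-Δ₁(m)` coming from `p - (p + 1) = -1`.
As in `dseq` and `nseq`, the index is shifted: `continuants a (k+1)` is `U_k`.
-/

section PairingRecurrences

variable {R M N : Type*} [CommRing R] [AddCommGroup M] [Module R M] [AddCommGroup N] [Module R N]

def twistedSum (β : M →ₗ[R] N →ₗ[R] R) (p : R) (u : ℕ → M) (w : ℕ → N) (k : ℕ) : R :=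
  p * β (u (k+1)) (w k) + (p + 1) * β (u k) (w (k+1))

def casoratian (β : M →ₗ[R] N →ₗ[R] R) (u : ℕ → M) (w : ℕ → N) (k : ℕ) : R :=
  β (u (k+1)) (w k) - β (u k) (w (k+1))

variable {β : M →ₗ[R] N →ₗ[R] R} {p c : R} {u : ℕ → M} {w : ℕ → N} {k : ℕ}

theorem pairing_succ_succ (hu : u (k+2) = p • u (k+1) + c • u k)
    (hw : w (k+2) = (p + 1) • w (k+1) + c • w k) :
    β (u (k+2)) (w (k+2)) =
      (p^2 + p) * β (u (k+1)) (w (k+1)) + c * twistedSum β p u w k + c^2 * β (u k) (w k) := by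
  simp only [twistedSum, hu, hw, map_add, map_smul, LinearMap.add_apply, LinearMap.smul_apply,
    smul_eq_mul]
  ring

theorem twistedSum_succ (hu : u (k+2) = p • u (k+1) + c • u k)
    (hw : w (k+2) = (p + 1) • w (k+1) + c • w k) :
    twistedSum β p u w (k+1) =
      (2 * (p^2 + p) + 1) * β (u (k+1)) (w (k+1)) + c * twistedSum β p u w k
        + c * casoratian β u w k := by
  simp only [twistedSum, casoratian, hu, hw, map_add, map_smul, LinearMap.add_apply,
    LinearMap.smul_apply, smul_eq_mul]
  ring

theorem casoratian_succ (hu : u (k+2) = p • u (k+1) + c • u k)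
    (hw : w (k+2) = (p + 1) • w (k+1) + c • w k) :
    casoratian β u w (k+1) = -β (u (k+1)) (w (k+1)) - c * casoratian β u w k := by
  simp only [casoratian, hu, hw, map_add, map_smul, LinearMap.add_apply, LinearMap.smul_apply,
    smul_eq_mul]
  ring

end PairingRecurrences

noncomputable def continuants (a : ℕ → ℝ) (k : ℕ) : Fin 2 → ℝ[X] := ![dseq a k, nseq a k]

noncomputable def shiftedContinuants (a : ℕ → ℝ) (k : ℕ) : Fin 2 → ℝ[X] :=
  fun i => shiftUp (continuants a k i)

noncomputable def deltaPairing (Fs F : ℝ[X]) :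
    (Fin 2 → ℝ[X]) →ₗ[ℝ[X]] (Fin 2 → ℝ[X]) →ₗ[ℝ[X]] ℝ[X] :=
  Matrix.toLinearMap₂' ℝ[X] !![Fs.comp (X^2 + X), F.comp (X^2 + X); -F.comp (X^2 + X), 0]

theorem deltaPairing_apply (Fs F : ℝ[X]) (x y : Fin 2 → ℝ[X]) :
    deltaPairing Fs F x y =
      Fs.comp (X^2 + X) * (x 0 * y 0) - F.comp (X^2 + X) * (x 1 * y 0 - x 0 * y 1) := by
  simp only [deltaPairing, Matrix.toLinearMap₂'_apply, Matrix.of_apply, Matrix.cons_val',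
    Matrix.cons_val_fin_one, smul_eq_mul, Fin.sum_univ_two, Matrix.cons_val_zero,
    Matrix.cons_val_one, mul_neg, mul_zero, add_zero]
  ring

theorem continuants_succ_succ (a : ℕ → ℝ) (k : ℕ) :
    continuants a (k+2) = (X : ℝ[X]) • continuants a (k+1) + C (a (k+1)) • continuants a k := by
  ext i
  fin_cases i <;> rfl

theorem shiftedContinuants_succ_succ (a : ℕ → ℝ) (k : ℕ) :
    shiftedContinuants a (k+2) =
      (X + 1 : ℝ[X]) • shiftedContinuants a (k+1) + C (a (k+1)) • shiftedContinuants a k := by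
  ext1 i
  simp [shiftedContinuants, continuants_succ_succ, shiftUp]

section

variable (a : ℕ → ℝ) (Fs F : ℝ[X]) (m : ℕ)

theorem delta1_eq_deltaPairing :
    delta1 a Fs F m =
      deltaPairing Fs F (continuants a (m+1)) (shiftedContinuants a (m+1)) := by
  simp only [delta1, deltaPairing_apply, continuants, shiftedContinuants,
    Matrix.cons_val_zero, Matrix.cons_val_one]
  ring

theorem delta1pred_eq_deltaPairing :
    delta1pred a Fs F m = deltaPairing Fs F (continuants a m) (shiftedContinuants a m) := by
  cases m with
  | zero => simp [deltaPairing_apply, delta1pred, continuants, shiftedContinuants, dseq, shiftUp]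
  | succ m => exact delta1_eq_deltaPairing a Fs F m

theorem delta2_eq_twistedSum :
    delta2 a Fs F m =
      twistedSum (deltaPairing Fs F) X (continuants a) (shiftedContinuants a) m := by
  simp only [delta2, twistedSum, deltaPairing_apply, continuants, shiftedContinuants,
    Matrix.cons_val_zero, Matrix.cons_val_one]
  ring

theorem delta3_eq_casoratian :
    delta3 a Fs F m = casoratian (deltaPairing Fs F) (continuants a) (shiftedContinuants a) m := by
  simp only [delta3, casoratian, deltaPairing_apply, continuants, shiftedContinuants,
    Matrix.cons_val_zero, Matrix.cons_val_one]
  ring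

end

/-- The recurrence relations of Lemma 4 (lemma:delta) for the polynomials `Δᵢ`. -/
theorem delta_recurrences (a : ℕ → ℝ) (Fs F : Polynomial ℝ) (m : ℕ) :
    delta1 a Fs F (m+1) =
        (X^2 + X) * delta1 a Fs F m + C (a (m+1)) * delta2 a Fs F m
          + C (a (m+1))^2 * delta1pred a Fs F m ∧
    delta2 a Fs F (m+1) =
        (2 * (X^2 + X) + 1) * delta1 a Fs F m + C (a (m+1)) * delta2 a Fs F m
          + C (a (m+1)) * delta3 a Fs F m ∧
    delta3 a Fs F (m+1) = - delta1 a Fs F m - C (a (m+1)) * delta3 a Fs F m ∧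
    delta4 a Fs F (m+1) = 2 * (X^2 + X) * delta1 a Fs F m + C (a (m+1)) * delta2 a Fs F m := by
  have hu := continuants_succ_succ a m
  have hw := shiftedContinuants_succ_succ a m
  simp only [delta4, delta1_eq_deltaPairing, delta1pred_eq_deltaPairing, delta2_eq_twistedSum,
    delta3_eq_casoratian]
  refine ⟨pairing_succ_succ hu hw, twistedSum_succ hu hw, casoratian_succ hu hw, ?_⟩
  rw [twistedSum_succ hu hw, casoratian_succ hu hw]
  ring
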